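/- arXiv:1506.08306 — 2 statements merged into one kernel-verified Lean document; each statement's English description precedes it below -/
import Mathlib

section
/- There exist s₁₀' ≥ 1 and a constant C > 0 (depending only on p, μ, K and χ₀) such that for all s₀ ≥ s₁₀' the following holds for each of the two functions g(y) = χ(2y, s₀) and g(y) = y χ(2y, s₀): g_e ≡ 0 and ‖g_−(y)/(1+|y|³)‖_{L^∞(ℝ)} ≤ C/s₀^{2β}; moreover, if g(y) = χ(2y,s₀) then |g₀ − 1| ≤ C e^{−s₀^{2β}}, |g₁| ≤ C e^{−s₀^{2β}} and |g₂| ≤ C e^{−s₀^{2β}}, while if g(y) = y χ(2y,s₀) then |g₁ − 1| ≤ C e^{−s₀^{2β}}, |g₀| ≤ C e^{−s₀^{2β}} and |g₂| ≤ C e^{−s₀^{2β}}. -/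
noncomputable section
open MeasureTheory Real Set Filter Topology

namespace NLHeat

/-- Bundled parameters of the problem: `p > 3`, `μ > 0`, the cut-off function `χ₀`,
the constant `K ≥ 6` and the exponent `γ` with `3β < γ < min(5β-1, 2β+1)`. -/
structure Params where
  p : ℝ
  μ : ℝ
  K : ℝ
  χ₀ : ℝ → ℝ
  γ : ℝ
  hp : 3 < p
  hμ : 0 < μ
  hK : 6 ≤ K
  hχ_smooth : ContDiffOn ℝ (⊤ : ℕ∞) χ₀ (Ici 0)
  hχ_anti : AntitoneOn χ₀ (Ici 0)
  hχ_one : ∀ x ∈ Icc (0:ℝ) 1, χ₀ x = 1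
  hχ_supp : ∀ x : ℝ, 2 ≤ x → χ₀ x = 0
  hχ_range : ∀ x : ℝ, 0 ≤ x → χ₀ x ∈ Icc (0:ℝ) 1
  hγ_lo : 3 * ((p + 1) / (2 * (p - 1))) < γ
  hγ_hi : γ < min (5 * ((p + 1) / (2 * (p - 1))) - 1) (2 * ((p + 1) / (2 * (p - 1))) + 1)

/-- The Gaussian weight `ρ(y) = (4π)^{-1/2} e^{-y²/4}`. -/
def rho (y : ℝ) : ℝ := (4 * π) ^ (-(1:ℝ)/2) * Real.exp (-(y^2)/4)

/-- The Hermite polynomials `h₀ = 1`, `h₁ = y`, `h₂ = y² - 2`. -/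
def h : ℕ → ℝ → ℝ
  | 0, _ => 1
  | 1, y => y
  | _, y => y^2 - 2

/-- The normalized Hermite polynomials `k_m = h_m / ∫ h_m² ρ`. -/
def k (m : ℕ) (y : ℝ) : ℝ := h m y / ∫ x : ℝ, (h m x)^2 * rho x

/-- The linearized operator `L v = v'' - (y/2) v' + v`. -/
def Lop (v : ℝ → ℝ) (y : ℝ) : ℝ := deriv (deriv v) y - y / 2 * deriv v y + v y

namespace Params

/-- `q = 2p/(p+1)`. -/
def q (P : Params) : ℝ := 2 * P.p / (P.p + 1)

/-- `β = (p+1)/(2(p-1))`. -/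
def β (P : Params) : ℝ := (P.p + 1) / (2 * (P.p - 1))

/-- `κ = (p-1)^{-1/(p-1)}`. -/
def κ (P : Params) : ℝ := (P.p - 1) ^ (-(1:ℝ) / (P.p - 1))

/-- The constant `b`. -/
def b (P : Params) : ℝ :=
  (1/2) * (P.p - 1) ^ ((P.p - 2) / (P.p - 1)) *
    (((4 * π) ^ ((1:ℝ)/2) * (P.p + 1)^2) /
      (P.p * ∫ y : ℝ, |y| ^ P.q * Real.exp (-(y^2)/4))) ^ ((P.p + 1)/(P.p - 1)) *
    P.μ ^ (-((P.p + 1)/(P.p - 1)))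

/-- The constant `a = 2bκ/(p-1)²`. -/
def a (P : Params) : ℝ := 2 * P.b * P.κ / (P.p - 1)^2

/-- The blow-up profile `φ(y,s) = (p-1 + b y²/s^{2β})^{-1/(p-1)} + a/s^{2β}`. -/
def φ (P : Params) (y s : ℝ) : ℝ :=
  (P.p - 1 + P.b * y^2 / s ^ (2 * P.β)) ^ (-(1:ℝ)/(P.p - 1)) + P.a / s ^ (2 * P.β)

/-- The cut-off `χ(y,s) = χ₀(|y|/(K s^β))`. -/
def chi (P : Params) (y s : ℝ) : ℝ := P.χ₀ (|y| / (P.K * s ^ P.β))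

/-- Projection of (the truncation of) `r` on `h_m`: `r_m = ∫ r χ k_m ρ`. -/
def proj (P : Params) (r : ℝ → ℝ) (s : ℝ) (m : ℕ) : ℝ :=
  ∫ y : ℝ, r y * P.chi y s * k m y * rho y

/-- The negative part `r₋ = r_b - r₀h₀ - r₁h₁ - r₂h₂` where `r_b = rχ`. -/
def rminus (P : Params) (r : ℝ → ℝ) (s y : ℝ) : ℝ :=
  r y * P.chi y s -
    (P.proj r s 0 * h 0 y + P.proj r s 1 * h 1 y + P.proj r s 2 * h 2 y)

/-- The outer part `r_e = r(1-χ)`. -/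
def re (P : Params) (r : ℝ → ℝ) (s y : ℝ) : ℝ := r y * (1 - P.chi y s)

/-- The shrinking set `ϑ_A(s)`. -/
def memTheta (P : Params) (A s : ℝ) (r : ℝ → ℝ) : Prop :=
  (∀ y : ℝ, |P.re r s y| ≤ A^2 / s ^ (P.γ - 3 * P.β)) ∧
  (∀ y : ℝ, |P.rminus r s y| ≤ A / s ^ P.γ * (1 + |y|^3)) ∧
  |P.proj r s 0| ≤ A / s ^ (2 * P.β + 1) ∧
  |P.proj r s 1| ≤ A / s ^ (2 * P.β + 1) ∧
  |P.proj r s 2| ≤ Real.sqrt A / s ^ (4 * P.β - 1)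

/-- The potential `V(y,s) = p φ^{p-1} - p/(p-1)`. -/
def Vpot (P : Params) (y s : ℝ) : ℝ := P.p * (P.φ y s) ^ (P.p - 1) - P.p / (P.p - 1)

/-- The quadratic term `B(v)`. -/
def Bterm (P : Params) (v : ℝ → ℝ) (y s : ℝ) : ℝ :=
  |P.φ y s + v y| ^ (P.p - 1) * (P.φ y s + v y) - (P.φ y s) ^ P.p -
    P.p * (P.φ y s) ^ (P.p - 1) * v y

/-- The gradient term `G(v) = μ|∂_yφ + ∂_yv|^q - μ|∂_yφ|^q`. -/
def Gterm (P : Params) (v : ℝ → ℝ) (y s : ℝ) : ℝ :=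
  P.μ * |deriv (fun z => P.φ z s) y + deriv v y| ^ P.q -
    P.μ * |deriv (fun z => P.φ z s) y| ^ P.q

/-- The rest term `R(y,s)`. -/
def Rterm (P : Params) (y s : ℝ) : ℝ :=
  deriv (deriv (fun z => P.φ z s)) y - y / 2 * deriv (fun z => P.φ z s) y -
    P.φ y s / (P.p - 1) + (P.φ y s) ^ P.p - deriv (fun σ => P.φ y σ) s +
    P.μ * |deriv (fun z => P.φ z s) y| ^ P.q

/-- `v` solves equation (E): `∂_s v = (L+V)v + B(v) + G(v) + R` on `ℝ × [s₀,s₁]`. -/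
def SolvesE (P : Params) (v : ℝ → ℝ → ℝ) (s₀ s₁ : ℝ) : Prop :=
  ∀ s ∈ Icc s₀ s₁, ∀ y : ℝ,
    HasDerivAt (fun σ => v σ y)
      (Lop (v s) y + P.Vpot y s * v s y + P.Bterm (v s) y s + P.Gterm (v s) y s +
        P.Rterm y s) s

/-- The initial data `ψ_{s₀,d₀,d₁}`. -/
def ψinit (P : Params) (A s₀ d₀ d₁ : ℝ) (y : ℝ) : ℝ :=
  A / s₀ ^ (2 * P.β + 1) * (d₀ * h 0 y + d₁ * h 1 y) * P.chi (2 * y) s₀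

end Params

end NLHeat

/-!
Since `K ≥ 6`, `χ(2y, s₀)` vanishes wherever `χ(y, s₀) ≠ 1`, so each `g = h_n χ(2·, s₀)` (`n = 0, 1`)
satisfies `g χ = g`: hence `g_e = 0` and `g_m = ∫ g h_m ρ / ∫ h_m² ρ`. By orthogonality of
`h₀, h₁, h₂` in `L²(ρ)`, `g_m - δ_{nm} = ∫ (χ(2y) - 1) h_n h_m ρ / ∫ h_m² ρ`, and `χ(2y) - 1` lives on
`|y| > 3 s₀^β`, where `ρ(y) ≤ e^{-s₀^{2β}} e^{-y²/8}`. Finally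
`g_- = (χ(2y) - 1) h_n - Σ_m (g_m - δ_{nm}) h_m`, and on `|y| > 3 s₀^β` both `1` and `|y|` are at most
`|y|³ / s₀^{2β}`.
-/

lemma integral_eq_zero_of_odd {f : ℝ → ℝ} (hf : ∀ y, f (-y) = -f y) : ∫ y, f y = 0 := by
  have h := integral_neg_eq_self f volume
  simp only [hf, integral_neg] at h
  linarith

lemma integrable_pow_mul_exp_neg_mul_sq {b : ℝ} (hb : 0 < b) (n : ℕ) :
    Integrable fun x : ℝ => x ^ n * exp (-b * x ^ 2) := by
  simpa [Real.rpow_natCast] using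
    integrable_rpow_mul_exp_neg_mul_sq hb (s := n) (by linarith [n.cast_nonneg (α := ℝ)])

lemma integrable_two_add_sq_sq_mul_exp_neg_mul_sq {b : ℝ} (hb : 0 < b) :
    Integrable fun x : ℝ => (2 + x ^ 2) ^ 2 * exp (-b * x ^ 2) := by
  have h := fun n => integrable_pow_mul_exp_neg_mul_sq hb n
  refine ((((h 0).const_mul 4).add ((h 2).const_mul 4)).add (h 4)).congr (ae_of_all _ fun x => ?_)
  simp only [Pi.add_apply]; ring

namespace NLHeat

lemma rho_eq_gaussianPDFReal : rho = ProbabilityTheory.gaussianPDFReal 0 2 := by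
  ext y
  simp only [rho, ProbabilityTheory.gaussianPDFReal, sub_zero, NNReal.coe_ofNat]
  rw [Real.sqrt_eq_rpow, ← Real.rpow_neg (by positivity)]
  ring_nf

lemma rho_pos (y : ℝ) : 0 < rho y := by
  unfold rho; positivity

lemma rho_neg (y : ℝ) : rho (-y) = rho y := by simp [rho]

lemma continuous_rho : Continuous rho := by
  unfold rho; fun_prop

lemma rho_le_exp (y : ℝ) : rho y ≤ exp (-(1 / 4) * y ^ 2) := by
  have h : (4 * π) ^ (-(1:ℝ)/2) ≤ 1 :=
    Real.rpow_le_one_of_one_le_of_nonpos (by linarith [Real.pi_gt_three]) (by norm_num)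
  calc rho y ≤ 1 * exp (-(y ^ 2) / 4) := by unfold rho; gcongr
    _ = _ := by ring_nf

lemma integral_sq_sub_two_mul_rho : ∫ y, (y ^ 2 - 2) * rho y = 0 := by
  open ProbabilityTheory in
  have hsq : Integrable (fun y : ℝ => y ^ 2) (gaussianReal 0 2) :=
    (memLp_id_gaussianReal 2).integrable_sq
  have hvar : ∫ y, y ^ 2 ∂gaussianReal 0 2 = 2 := by
    have := variance_fun_id_gaussianReal (μ := 0) (v := 2)
    rw [variance_eq_integral measurable_id'.aemeasurable] at this
    simpa using this
  have := integral_gaussianReal_eq_integral_smul (μ := 0) (v := 2)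
    (f := fun y : ℝ => y ^ 2 - 2) two_ne_zero
  rw [integral_sub hsq (integrable_const _), hvar] at this
  simpa [rho_eq_gaussianPDFReal, mul_comm] using this.symm

lemma continuous_h (m : ℕ) : Continuous (h m) := by
  match m with
  | 0 => exact continuous_const
  | 1 => exact continuous_id
  | _ + 2 => exact (continuous_pow 2).sub continuous_const

lemma abs_h_le (m : ℕ) (y : ℝ) : |h m y| ≤ 2 + y ^ 2 := by
  match m with
  | 0 => simp only [h, abs_one]; nlinarith [sq_nonneg y]
  | 1 => simp only [h]; nlinarith [sq_abs y, abs_nonneg y, sq_nonneg (|y| - 1)]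
  | _ + 2 => simp only [h]; rw [abs_le]; constructor <;> nlinarith [sq_nonneg y]

lemma abs_h_le_three_mul (m : ℕ) (y : ℝ) : |h m y| ≤ 3 * (1 + |y| ^ 3) := by
  have hy : y ^ 2 ≤ 1 + |y| ^ 3 := by
    rw [← sq_abs]; nlinarith [abs_nonneg y, sq_nonneg (|y| - 1)]
  linarith [abs_h_le m y, pow_nonneg (abs_nonneg y) 3]

lemma abs_h_le_abs {n : ℕ} (hn : n ≤ 1) {y : ℝ} (hy : 1 ≤ |y|) : |h n y| ≤ |y| := by
  interval_cases n <;> simp [h, hy]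

lemma abs_h_mul_h_le (n m : ℕ) (y : ℝ) : |h n y * h m y| ≤ (2 + y ^ 2) ^ 2 := by
  rw [abs_mul, sq]
  exact mul_le_mul (abs_h_le n y) (abs_h_le m y) (abs_nonneg _) (by positivity)

lemma integrable_mul_h_mul_h_mul_rho {f : ℝ → ℝ} (hf : Continuous f) (hf1 : ∀ y, |f y| ≤ 1)
    (n m : ℕ) : Integrable fun y => f y * (h n y * h m y) * rho y := by
  refine (integrable_two_add_sq_sq_mul_exp_neg_mul_sq (b := 1 / 4) (by norm_num)).mono'
    ((hf.mul ((continuous_h n).mul (continuous_h m))).mul continuous_rho).aestronglyMeasurable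
    (ae_of_all _ fun y => ?_)
  rw [norm_eq_abs, abs_mul, abs_mul, abs_of_pos (rho_pos y)]
  have := hf1 y
  have := abs_h_mul_h_le n m y
  have := rho_le_exp y
  have := (rho_pos y).le
  calc |f y| * |h n y * h m y| * rho y ≤ 1 * (2 + y ^ 2) ^ 2 * exp (-(1 / 4) * y ^ 2) := by
        gcongr
    _ = _ := by rw [one_mul]

lemma integrable_abs_h_mul_h_mul_exp (n m : ℕ) :
    Integrable fun y => |h n y * h m y| * exp (-(1 / 8) * y ^ 2) := by
  refine (integrable_two_add_sq_sq_mul_exp_neg_mul_sq (b := 1 / 8) (by norm_num)).mono'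
    (((continuous_h n).mul (continuous_h m)).abs.mul (by fun_prop)).aestronglyMeasurable
    (ae_of_all _ fun y => ?_)
  rw [norm_eq_abs, abs_mul, abs_abs, abs_of_pos (exp_pos _)]
  gcongr
  exact abs_h_mul_h_le n m y

lemma integrable_h_mul_h_mul_rho (n m : ℕ) : Integrable fun y => h n y * h m y * rho y := by
  simpa using integrable_mul_h_mul_h_mul_rho (f := fun _ => 1) continuous_const (by simp) n m

def hNormSq (m : ℕ) : ℝ := ∫ x : ℝ, (h m x) ^ 2 * rho x

lemma hNormSq_pos (m : ℕ) : 0 < hNormSq m := by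
  have hne : ∀ x : ℝ, 2 < x → h m x ≠ 0 := fun x hx => by
    match m with
    | 0 => simp [h]
    | 1 => simp only [h]; linarith
    | _ + 2 => simp only [h]; nlinarith
  have hint : Integrable fun x => (h m x) ^ 2 * rho x := by
    simpa [sq] using integrable_h_mul_h_mul_rho m m
  rw [hNormSq, integral_pos_iff_support_of_nonneg (fun x => by positivity [rho_pos x]) hint]
  calc (0 : ENNReal) < volume (Ioi (2 : ℝ)) := by simp
    _ ≤ _ := measure_mono fun x hx => by
      simpa [Function.mem_support] using ⟨hne x hx, (rho_pos x).ne'⟩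

lemma integral_h_mul_h_mul_rho_of_ne {n m : ℕ} (hn : n ≤ 2) (hm : m ≤ 2) (hnm : n ≠ m) :
    ∫ y, h n y * h m y * rho y = 0 := by
  have hodd : ∀ {f : ℝ → ℝ}, (∀ y, f (-y) = -f y) → ∫ y, f y * rho y = 0 := fun hf =>
    integral_eq_zero_of_odd fun y => by rw [hf, rho_neg, neg_mul]
  interval_cases n <;> interval_cases m <;> simp only [h] at hnm ⊢ <;> first
    | exact absurd rfl hnm
    | simpa using integral_sq_sub_two_mul_rho
    | exact hodd fun y => by ring

lemma integral_h_mul_h_mul_rho_div {n m : ℕ} (hn : n ≤ 2) (hm : m ≤ 2) :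
    (∫ y, h n y * h m y * rho y) / hNormSq m = if n = m then 1 else 0 := by
  split_ifs with hnm
  · subst hnm
    simpa [hNormSq, sq] using div_self (hNormSq_pos n).ne'
  · rw [integral_h_mul_h_mul_rho_of_ne hn hm hnm, zero_div]

lemma abs_integral_mul_mul_rho_le {f w : ℝ → ℝ} {R : ℝ} (hR : 0 ≤ R)
    (hf : ∀ y, |f y| ≤ 1) (hf0 : ∀ y, |y| ≤ 3 * R → f y = 0)
    (hw : Integrable fun y => |w y| * exp (-(1 / 8) * y ^ 2)) :
    |∫ y, f y * w y * rho y| ≤ (∫ y, |w y| * exp (-(1 / 8) * y ^ 2)) * exp (-R ^ 2) := by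
  have hpt : ∀ y, ‖f y * w y * rho y‖ ≤ exp (-R ^ 2) * (|w y| * exp (-(1 / 8) * y ^ 2)) := by
    intro y
    rw [norm_eq_abs, abs_mul, abs_mul, abs_of_pos (rho_pos y)]
    by_cases hy : |y| ≤ 3 * R
    · rw [hf0 y hy, abs_zero, zero_mul, zero_mul]
      positivity
    -- outside `|y| ≤ 3R`, half of the Gaussian decay `e^{-y²/4}` already beats `e^{-R²}`
    have hsplit : exp (-(1 / 4) * y ^ 2) ≤ exp (-R ^ 2) * exp (-(1 / 8) * y ^ 2) := by
      rw [← exp_add]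
      gcongr
      nlinarith [sq_abs y, abs_nonneg y]
    have := hf y
    have := rho_le_exp y
    have := (rho_pos y).le
    calc |f y| * |w y| * rho y ≤ 1 * |w y| * exp (-(1 / 4) * y ^ 2) := by gcongr
      _ ≤ |w y| * (exp (-R ^ 2) * exp (-(1 / 8) * y ^ 2)) := by
        rw [one_mul]; gcongr
      _ = _ := by ring
  calc |∫ y, f y * w y * rho y|
      ≤ ∫ y, exp (-R ^ 2) * (|w y| * exp (-(1 / 8) * y ^ 2)) :=
        norm_integral_le_of_norm_le (hw.const_mul _) (ae_of_all _ hpt)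
    _ = _ := by rw [integral_const_mul, mul_comm]

lemma abs_mul_h_le {f : ℝ → ℝ} {R : ℝ} (hR : 1 ≤ R) (hf : ∀ y, |f y| ≤ 1)
    (hf0 : ∀ y, |y| ≤ 3 * R → f y = 0) {n : ℕ} (hn : n ≤ 1) (y : ℝ) :
    |f y * h n y| ≤ (1 + |y| ^ 3) / R ^ 2 := by
  rw [le_div_iff₀ (by positivity)]
  by_cases hy : |y| ≤ 3 * R
  · rw [hf0 y hy, zero_mul, abs_zero, zero_mul]
    positivity
  have hhn := abs_h_le_abs hn (show 1 ≤ |y| by linarith)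
  calc |f y * h n y| * R ^ 2 ≤ 1 * |y| * R ^ 2 := by
        rw [abs_mul]; gcongr; exact hf y
    _ ≤ |y| * |y| ^ 2 := by
        rw [one_mul]
        gcongr
        linarith
    _ ≤ 1 + |y| ^ 3 := by nlinarith

lemma exp_neg_sq_le_inv_sq {R : ℝ} (hR : 0 < R) : exp (-R ^ 2) ≤ 1 / R ^ 2 := by
  rw [le_div_iff₀ (by positivity), mul_comm]
  exact (mul_exp_neg_le_exp_neg_one _).trans (by simp)

def projConst (n m : ℕ) : ℝ :=
  (∫ y, |h n y * h m y| * exp (-(1 / 8) * y ^ 2)) / hNormSq m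

lemma projConst_nonneg (n m : ℕ) : 0 ≤ projConst n m :=
  div_nonneg (integral_nonneg fun _ => by positivity) (hNormSq_pos m).le

def projBound : ℝ := ∑ n ∈ Finset.range 3, ∑ m ∈ Finset.range 3, projConst n m

lemma projConst_le_projBound {n m : ℕ} (hn : n ≤ 2) (hm : m ≤ 2) :
    projConst n m ≤ projBound := by
  have hsum := fun n => Finset.sum_nonneg fun m (_ : m ∈ Finset.range 3) => projConst_nonneg n m
  calc projConst n m ≤ ∑ m ∈ Finset.range 3, projConst n m :=
        Finset.single_le_sum (fun m _ => projConst_nonneg n m) (Finset.mem_range.mpr (by omega))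
    _ ≤ projBound :=
        Finset.single_le_sum (fun n _ => hsum n) (Finset.mem_range.mpr (by omega))

lemma projBound_nonneg : 0 ≤ projBound :=
  (projConst_nonneg 0 0).trans (projConst_le_projBound (by norm_num) (by norm_num))

namespace Params

variable (P : Params) {s : ℝ}

lemma β_pos : 0 < P.β :=
  div_pos (by linarith [P.hp]) (by linarith [P.hp])

lemma one_le_rpow_β (hs : 1 ≤ s) : 1 ≤ s ^ P.β :=
  Real.one_le_rpow hs P.β_pos.le

lemma rpow_β_sq (hs : 0 ≤ s) : (s ^ P.β) ^ 2 = s ^ (2 * P.β) := by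
  rw [← Real.rpow_mul_natCast hs, mul_comm]; norm_num

lemma K_mul_rpow_β_pos (hs : 0 < s) : 0 < P.K * s ^ P.β :=
  mul_pos (by linarith [P.hK]) (Real.rpow_pos_of_pos hs _)

lemma chi_mem_Icc (hs : 0 < s) (y : ℝ) : P.chi y s ∈ Icc (0 : ℝ) 1 :=
  P.hχ_range _ (div_nonneg (abs_nonneg _) (P.K_mul_rpow_β_pos hs).le)

lemma abs_chi_sub_one_le_one (hs : 0 < s) (y : ℝ) : |P.chi y s - 1| ≤ 1 := by
  obtain ⟨h0, h1⟩ := P.chi_mem_Icc hs y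
  rw [abs_le]; constructor <;> linarith

lemma chi_eq_one (hs : 0 < s) {y : ℝ} (hy : |y| ≤ P.K * s ^ P.β) : P.chi y s = 1 :=
  P.hχ_one _ ⟨div_nonneg (abs_nonneg _) (P.K_mul_rpow_β_pos hs).le,
    (div_le_one (P.K_mul_rpow_β_pos hs)).mpr hy⟩

lemma chi_eq_zero (hs : 0 < s) {y : ℝ} (hy : 2 * (P.K * s ^ P.β) ≤ |y|) : P.chi y s = 0 :=
  P.hχ_supp _ ((le_div_iff₀ (P.K_mul_rpow_β_pos hs)).mpr hy)

lemma chi_two_mul_mul_chi (hs : 0 < s) (y : ℝ) :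
    P.chi (2 * y) s * P.chi y s = P.chi (2 * y) s := by
  rcases le_or_gt |y| (P.K * s ^ P.β) with hy | hy
  · rw [P.chi_eq_one hs hy, mul_one]
  · rw [P.chi_eq_zero hs (by rw [abs_mul, abs_two]; linarith), zero_mul]

lemma chi_two_mul_eq_one (hs : 0 < s) {y : ℝ} (hy : |y| ≤ 3 * s ^ P.β) :
    P.chi (2 * y) s = 1 :=
  P.chi_eq_one hs (by
    rw [abs_mul, abs_two]
    nlinarith [P.hK, Real.rpow_pos_of_pos hs P.β])

lemma continuous_chi (hs : 0 < s) : Continuous fun y => P.chi y s :=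
  P.hχ_smooth.continuousOn.comp_continuous (by fun_prop) fun y =>
    div_nonneg (abs_nonneg _) (P.K_mul_rpow_β_pos hs).le

lemma re_eq_zero_of_mul_chi_eq {r : ℝ → ℝ} (hr : ∀ y, r y * P.chi y s = r y) (y : ℝ) :
    P.re r s y = 0 := by
  rw [Params.re, mul_sub, mul_one, hr, sub_self]

lemma proj_eq_of_mul_chi_eq {r : ℝ → ℝ} (hr : ∀ y, r y * P.chi y s = r y) (m : ℕ) :
    P.proj r s m = (∫ y, r y * h m y * rho y) / hNormSq m := by
  simp only [Params.proj, hr, k]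
  rw [hNormSq, ← integral_div]
  congr 1; ext y; ring

lemma h_mul_chi_two_mul_mul_chi (hs : 0 < s) (n : ℕ) (y : ℝ) :
    h n y * P.chi (2 * y) s * P.chi y s = h n y * P.chi (2 * y) s := by
  rw [mul_assoc, P.chi_two_mul_mul_chi hs]

lemma proj_h_mul_chi_two_mul_sub (hs : 0 < s) (n m : ℕ) :
    P.proj (fun z => h n z * P.chi (2 * z) s) s m - (∫ y, h n y * h m y * rho y) / hNormSq m =
      (∫ y, (P.chi (2 * y) s - 1) * (h n y * h m y) * rho y) / hNormSq m := by
  have hf : Continuous fun y => P.chi (2 * y) s - 1 :=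
    ((P.continuous_chi hs).comp (continuous_const_mul 2)).sub continuous_const
  rw [P.proj_eq_of_mul_chi_eq (P.h_mul_chi_two_mul_mul_chi hs n), ← sub_div,
    ← integral_sub _ (integrable_h_mul_h_mul_rho n m)]
  · exact congrArg (· / hNormSq m) (integral_congr_ae (ae_of_all _ fun y => by ring))
  · refine ((integrable_mul_h_mul_h_mul_rho hf (fun y => P.abs_chi_sub_one_le_one hs _) n m).add
      (integrable_h_mul_h_mul_rho n m)).congr (ae_of_all _ fun y => ?_)
    simp only [Pi.add_apply]; ring

lemma abs_proj_h_mul_chi_two_mul_sub_le (hs : 0 < s) {n m : ℕ} (hn : n ≤ 2) (hm : m ≤ 2) :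
    |P.proj (fun z => h n z * P.chi (2 * z) s) s m - if n = m then 1 else 0| ≤
      projBound * exp (-s ^ (2 * P.β)) := by
  have htail := abs_integral_mul_mul_rho_le (w := fun y => h n y * h m y)
    (Real.rpow_nonneg hs.le P.β) (fun y => P.abs_chi_sub_one_le_one hs _)
    (fun y hy => by rw [P.chi_two_mul_eq_one hs hy, sub_self]) (integrable_abs_h_mul_h_mul_exp n m)
  rw [P.rpow_β_sq hs.le] at htail
  rw [← integral_h_mul_h_mul_rho_div hn hm, P.proj_h_mul_chi_two_mul_sub hs, abs_div,
    abs_of_pos (hNormSq_pos m)]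
  calc _ ≤ projConst n m * exp (-s ^ (2 * P.β)) := by
        rw [projConst, div_mul_eq_mul_div]
        exact div_le_div_of_nonneg_right htail (hNormSq_pos m).le
    _ ≤ _ := by gcongr; exact projConst_le_projBound hn hm

lemma rminus_h_mul_chi_two_mul_eq (hs : 0 < s) {n : ℕ} (hn : n ≤ 2) (y : ℝ) :
    P.rminus (fun z => h n z * P.chi (2 * z) s) s y =
      (P.chi (2 * y) s - 1) * h n y -
        ((P.proj (fun z => h n z * P.chi (2 * z) s) s 0 - if n = 0 then 1 else 0) * h 0 y +
          (P.proj (fun z => h n z * P.chi (2 * z) s) s 1 - if n = 1 then 1 else 0) * h 1 y +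
          (P.proj (fun z => h n z * P.chi (2 * z) s) s 2 - if n = 2 then 1 else 0) * h 2 y) := by
  rw [Params.rminus, P.h_mul_chi_two_mul_mul_chi hs]
  interval_cases n <;> simp only [h] <;> norm_num <;> ring

lemma abs_rminus_h_mul_chi_two_mul_le (hs : 1 ≤ s) {n : ℕ} (hn : n ≤ 1) (y : ℝ) :
    |P.rminus (fun z => h n z * P.chi (2 * z) s) s y| ≤
      (1 + 9 * projBound) / s ^ (2 * P.β) * (1 + |y| ^ 3) := by
  have hs0 : 0 < s := by linarith
  set R := s ^ P.β with hRdef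
  have hR : 1 ≤ R := P.one_le_rpow_β hs
  have hcut := abs_mul_h_le hR (fun y => P.abs_chi_sub_one_le_one hs0 (2 * y))
    (fun y hy => by rw [P.chi_two_mul_eq_one hs0 hy, sub_self]) hn y
  have herr : ∀ m ≤ 2, |(P.proj (fun z => h n z * P.chi (2 * z) s) s m -
      if n = m then 1 else 0) * h m y| ≤ 3 * projBound * ((1 + |y| ^ 3) / R ^ 2) := by
    intro m hm
    have hexp : exp (-s ^ (2 * P.β)) ≤ 1 / R ^ 2 := by
      rw [← P.rpow_β_sq hs0.le]; exact exp_neg_sq_le_inv_sq (by linarith)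
    have := projBound_nonneg
    rw [abs_mul]
    calc _ ≤ (projBound * (1 / R ^ 2)) * (3 * (1 + |y| ^ 3)) := by
          gcongr
          · exact (P.abs_proj_h_mul_chi_two_mul_sub_le hs0 (by omega) hm).trans (by gcongr)
          · exact abs_h_le_three_mul m y
      _ = _ := by ring
  rw [P.rminus_h_mul_chi_two_mul_eq hs0 (by omega), ← P.rpow_β_sq hs0.le, ← hRdef]
  calc _ ≤ |(P.chi (2 * y) s - 1) * h n y| + (|_| + |_| + |_|) :=
        (abs_sub _ _).trans (by gcongr; exact abs_add_three _ _ _)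
    _ ≤ (1 + |y| ^ 3) / R ^ 2 + (3 * projBound * ((1 + |y| ^ 3) / R ^ 2) +
          3 * projBound * ((1 + |y| ^ 3) / R ^ 2) + 3 * projBound * ((1 + |y| ^ 3) / R ^ 2)) := by
        gcongr
        exacts [herr 0 (by norm_num), herr 1 (by norm_num), herr 2 le_rfl]
    _ = _ := by ring

end Params

end NLHeat

/-- projections of `χ(2y,s₀)` and `y χ(2y,s₀)`. -/
theorem cutoff_projection_estimates (P : NLHeat.Params) :
    ∃ s₁₀' : ℝ, 1 ≤ s₁₀' ∧ ∃ C : ℝ, 0 < C ∧ ∀ s₀ : ℝ, s₁₀' ≤ s₀ →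
      -- the case g(y) = χ(2y,s₀)
      ((∀ y : ℝ, P.re (fun z => P.chi (2 * z) s₀) s₀ y = 0) ∧
       (∀ y : ℝ, |P.rminus (fun z => P.chi (2 * z) s₀) s₀ y| ≤
          C / s₀ ^ (2 * P.β) * (1 + |y|^3)) ∧
       |P.proj (fun z => P.chi (2 * z) s₀) s₀ 0 - 1| ≤ C * Real.exp (-(s₀ ^ (2 * P.β))) ∧
       |P.proj (fun z => P.chi (2 * z) s₀) s₀ 1| ≤ C * Real.exp (-(s₀ ^ (2 * P.β))) ∧
       |P.proj (fun z => P.chi (2 * z) s₀) s₀ 2| ≤ C * Real.exp (-(s₀ ^ (2 * P.β)))) ∧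
      -- the case g(y) = y χ(2y,s₀)
      ((∀ y : ℝ, P.re (fun z => z * P.chi (2 * z) s₀) s₀ y = 0) ∧
       (∀ y : ℝ, |P.rminus (fun z => z * P.chi (2 * z) s₀) s₀ y| ≤
          C / s₀ ^ (2 * P.β) * (1 + |y|^3)) ∧
       |P.proj (fun z => z * P.chi (2 * z) s₀) s₀ 1 - 1| ≤ C * Real.exp (-(s₀ ^ (2 * P.β))) ∧
       |P.proj (fun z => z * P.chi (2 * z) s₀) s₀ 0| ≤ C * Real.exp (-(s₀ ^ (2 * P.β))) ∧
       |P.proj (fun z => z * P.chi (2 * z) s₀) s₀ 2| ≤ C * Real.exp (-(s₀ ^ (2 * P.β)))) := by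
  refine ⟨1, le_rfl, 1 + 9 * NLHeat.projBound, by linarith [NLHeat.projBound_nonneg],
    fun s₀ hs => ?_⟩
  have hs0 : 0 < s₀ := by linarith
  have hre (n : ℕ) := P.re_eq_zero_of_mul_chi_eq (P.h_mul_chi_two_mul_mul_chi hs0 n)
  have hminus (n : ℕ) (hn : n ≤ 1) := P.abs_rminus_h_mul_chi_two_mul_le hs hn
  have hproj (n m : ℕ) (hn : n ≤ 1) (hm : m ≤ 2) :
      |P.proj (fun z => NLHeat.h n z * P.chi (2 * z) s₀) s₀ m - if n = m then 1 else 0| ≤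
        (1 + 9 * NLHeat.projBound) * Real.exp (-s₀ ^ (2 * P.β)) :=
    (P.abs_proj_h_mul_chi_two_mul_sub_le hs0 (by omega) hm).trans
      (by gcongr; linarith [NLHeat.projBound_nonneg])
  have h_zero : (fun z => P.chi (2 * z) s₀) = fun z => NLHeat.h 0 z * P.chi (2 * z) s₀ := by
    simp [NLHeat.h]
  have h_one : (fun z => z * P.chi (2 * z) s₀) = fun z => NLHeat.h 1 z * P.chi (2 * z) s₀ := rfl
  rw [h_zero, h_one]
  exact ⟨⟨hre 0, hminus 0 zero_le_one, by simpa using hproj 0 0, by simpa using hproj 0 1,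
      by simpa using hproj 0 2⟩,
    ⟨hre 1, hminus 1 le_rfl, by simpa using hproj 1 1, by simpa using hproj 1 0,
      by simpa using hproj 1 2⟩⟩
end
end

section
/- There exist a constant C > 0 and s* ≥ 1 such that for all s ≥ s*: ‖∂_yφ(·,s)‖_{L^∞(ℝ)} ≤ C/s^β, ‖∂_sφ(·,s)‖_{L^∞(ℝ)} ≤ C/s, ‖∂_y²φ(·,s)‖_{L^∞(ℝ)} ≤ C/s^{2β}, and the rest term satisfies ‖R(·,s)‖_{L^∞(ℝ)} ≤ C/s, where R(y,s) = ∂_y²φ − (y/2)∂_yφ − φ/(p−1) + φ^p − ∂_sφ + μ|∂_yφ|^q. -/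
noncomputable section
open MeasureTheory Real Set Filter Topology

/-!
Writing `ξ = y / s^β`, the profile is `φ(y,s) = Φ(ξ) + a/s^{2β}` with
`Φ(ξ) = (p - 1 + b ξ²)^{-1/(p-1)}`. Each `y`-derivative therefore gains a factor `s^{-β}`, and
`∂_sφ = -(β/s) ξ Φ'(ξ) + O(s^{-2β-1})`. Each of `Φ'`, `ξ Φ'` and `Φ''` is a bounded rational
function of `ξ` times `Φ ≤ (p-1)^{-1/(p-1)}`. In `R`, the terms of order one,
`-(ξ/2) Φ' - Φ/(p-1) + Φ^p`, vanish identically, since `Φ^{p-1} = 1/(p - 1 + b ξ²)`; the remaining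
terms are `O(1/s)` because `2β ≥ 1`, `βq = p/(p-1) ≥ 1`, and `x ↦ x^p` is locally Lipschitz.
-/

namespace NLHeat

lemma rpow_sub_rpow_le {x y r : ℝ} (hr : 1 ≤ r) (hy : 0 ≤ y) (hyx : y ≤ x) :
    x ^ r - y ^ r ≤ r * x ^ (r - 1) * (x - y) := by
  rcases hyx.eq_or_lt with rfl | hlt
  · simp
  have hx : 0 < x := hy.trans_lt hlt
  have h := one_add_mul_self_le_rpow_one_add (s := y / x - 1)
    (by linarith [div_nonneg hy hx.le]) hr
  rw [add_sub_cancel, Real.div_rpow hy hx.le, le_div_iff₀ (by positivity)] at h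
  rw [Real.rpow_sub_one hx.ne']
  field_simp at h ⊢
  nlinarith [Real.rpow_pos_of_pos hx r]

lemma hasDerivAt_div_rpow (c r : ℝ) {s : ℝ} (hs : 0 < s) :
    HasDerivAt (fun σ => c / σ ^ r) (-(r / s) * (c / s ^ r)) s := by
  refine ((hasDerivAt_const s c).div (Real.hasDerivAt_rpow_const (p := r) (Or.inl hs.ne'))
    (Real.rpow_pos_of_pos hs r).ne').congr_deriv ?_
  rw [Real.rpow_sub_one hs.ne']
  field_simp
  ring

lemma div_rpow_le_div_self {C r s : ℝ} (hC : 0 ≤ C) (hs : 1 ≤ s) (hr : 1 ≤ r) :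
    C / s ^ r ≤ C / s :=
  div_le_div_of_nonneg_left hC (by positivity) (Real.self_le_rpow_of_one_le hs hr)

def profile (p b ξ : ℝ) : ℝ := (p - 1 + b * ξ ^ 2) ^ (-(1:ℝ) / (p - 1))

def profileDeriv (p b ξ : ℝ) : ℝ :=
  -(2 * b * ξ) / ((p - 1) * (p - 1 + b * ξ ^ 2)) * profile p b ξ

def profileDeriv2 (p b ξ : ℝ) : ℝ :=
  (-(2 * b * (p - 1 - b * ξ ^ 2)) / ((p - 1) * (p - 1 + b * ξ ^ 2) ^ 2) +
    (2 * b * ξ / ((p - 1) * (p - 1 + b * ξ ^ 2))) ^ 2) * profile p b ξ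

section Profile

variable {p b : ℝ}

lemma profile_base_pos (hp : 1 < p) (hb : 0 ≤ b) (ξ : ℝ) : 0 < p - 1 + b * ξ ^ 2 := by
  nlinarith [mul_nonneg hb (sq_nonneg ξ)]

lemma profile_pos (hp : 1 < p) (hb : 0 ≤ b) (ξ : ℝ) : 0 < profile p b ξ :=
  Real.rpow_pos_of_pos (profile_base_pos hp hb ξ) _

lemma profile_le (hp : 1 < p) (hb : 0 ≤ b) (ξ : ℝ) :
    profile p b ξ ≤ (p - 1) ^ (-(1:ℝ) / (p - 1)) :=
  Real.rpow_le_rpow_of_nonpos (by linarith) (by nlinarith [mul_nonneg hb (sq_nonneg ξ)])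
    (div_nonpos_of_nonpos_of_nonneg (by norm_num) (by linarith))

lemma hasDerivAt_profile (hp : 1 < p) (hb : 0 ≤ b) (ξ : ℝ) :
    HasDerivAt (profile p b) (profileDeriv p b ξ) ξ := by
  have hw := profile_base_pos hp hb ξ
  have : p - 1 ≠ 0 := by linarith
  refine ((((hasDerivAt_pow 2 ξ).const_mul b).const_add (p - 1)).rpow_const
    (p := -(1:ℝ) / (p - 1)) (Or.inl hw.ne')).congr_deriv ?_
  rw [profileDeriv, profile, Real.rpow_sub_one hw.ne']
  field_simp
  ring

lemma hasDerivAt_profileDeriv (hp : 1 < p) (hb : 0 ≤ b) (ξ : ℝ) :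
    HasDerivAt (profileDeriv p b) (profileDeriv2 p b ξ) ξ := by
  have hw := profile_base_pos hp hb ξ
  have : p - 1 ≠ 0 := by linarith
  have hg : HasDerivAt (fun ξ => -(2 * b * ξ) / ((p - 1) * (p - 1 + b * ξ ^ 2)))
      (-(2 * b * (p - 1 - b * ξ ^ 2)) / ((p - 1) * (p - 1 + b * ξ ^ 2) ^ 2)) ξ := by
    refine ((((hasDerivAt_id' ξ).const_mul (2 * b)).neg).div
      ((((hasDerivAt_pow 2 ξ).const_mul b).const_add (p - 1)).const_mul (p - 1))
      (by positivity)).congr_deriv ?_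
    simp only [Pi.neg_apply]
    field_simp
    ring
  refine (hg.mul (hasDerivAt_profile hp hb ξ)).congr_deriv ?_
  rw [profileDeriv2, profileDeriv]
  field_simp

/-- `Φ` solves the ODE obtained from the equation by dropping `∂_y²` and `∂_s`. -/
lemma profile_ode (hp : 1 < p) (hb : 0 ≤ b) (ξ : ℝ) :
    -(ξ / 2) * profileDeriv p b ξ - profile p b ξ / (p - 1) + profile p b ξ ^ p = 0 := by
  have hw := profile_base_pos hp hb ξ
  have : p - 1 ≠ 0 := by linarith
  have hpow : profile p b ξ ^ p = profile p b ξ / (p - 1 + b * ξ ^ 2) := by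
    rw [profile, ← Real.rpow_mul hw.le, ← Real.rpow_sub_one hw.ne']
    congr 1
    field_simp
    ring
  rw [hpow, profileDeriv]
  have hw' := hw.ne'
  generalize hw_def : p - 1 + b * ξ ^ 2 = w at hw' ⊢
  field_simp
  linear_combination profile p b ξ * hw_def

lemma abs_mul_profile_le (hp : 1 < p) (hb : 0 ≤ b) (ξ : ℝ) {c C : ℝ} (h : |c| ≤ C) :
    |c * profile p b ξ| ≤ C * (p - 1) ^ (-(1:ℝ) / (p - 1)) := by
  rw [abs_mul, abs_of_pos (profile_pos hp hb ξ)]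
  exact mul_le_mul h (profile_le hp hb ξ) (profile_pos hp hb ξ).le ((abs_nonneg c).trans h)

lemma abs_profileDeriv_coeff_le (hp : 1 < p) (hb : 0 ≤ b) (ξ : ℝ) :
    |2 * b * ξ / ((p - 1) * (p - 1 + b * ξ ^ 2))| ≤ (1 + b / (p - 1)) / (p - 1) := by
  have hw := profile_base_pos hp hb ξ
  have hp1 : 0 < p - 1 := by linarith
  rw [abs_div, abs_of_pos (mul_pos hp1 hw), div_le_iff₀ (mul_pos hp1 hw), abs_mul,
    abs_of_nonneg (by positivity : 0 ≤ 2 * b)]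
  have h2ξ : 2 * b * |ξ| ≤ b + b * ξ ^ 2 := by
    nlinarith [mul_nonneg hb (sq_nonneg (|ξ| - 1)), sq_abs ξ]
  field_simp
  nlinarith [mul_le_mul_of_nonneg_left h2ξ hp1.le, mul_nonneg hb (mul_nonneg hb (sq_nonneg ξ))]

lemma abs_profileDeriv_le (hp : 1 < p) (hb : 0 ≤ b) (ξ : ℝ) :
    |profileDeriv p b ξ| ≤ (1 + b / (p - 1)) / (p - 1) * (p - 1) ^ (-(1:ℝ) / (p - 1)) :=
  abs_mul_profile_le hp hb ξ (by rw [neg_div, abs_neg]; exact abs_profileDeriv_coeff_le hp hb ξ)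

lemma abs_mul_profileDeriv_le (hp : 1 < p) (hb : 0 ≤ b) (ξ : ℝ) :
    |ξ * profileDeriv p b ξ| ≤ 2 / (p - 1) * (p - 1) ^ (-(1:ℝ) / (p - 1)) := by
  rw [profileDeriv, ← mul_assoc]
  refine abs_mul_profile_le hp hb ξ ?_
  have hw := profile_base_pos hp hb ξ
  have hp1 : 0 < p - 1 := by linarith
  have hbξ := mul_nonneg hb (sq_nonneg ξ)
  rw [mul_div_assoc', abs_div, abs_of_pos (mul_pos hp1 hw),
    div_le_div_iff₀ (mul_pos hp1 hw) hp1, show ξ * -(2 * b * ξ) = -(2 * (b * ξ ^ 2)) by ring,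
    abs_neg, abs_of_nonneg (by positivity)]
  nlinarith

lemma abs_profileDeriv2_le (hp : 1 < p) (hb : 0 ≤ b) (ξ : ℝ) :
    |profileDeriv2 p b ξ| ≤
      (2 * b / (p - 1) ^ 2 + ((1 + b / (p - 1)) / (p - 1)) ^ 2) *
        (p - 1) ^ (-(1:ℝ) / (p - 1)) := by
  refine abs_mul_profile_le hp hb ξ ((abs_add_le _ _).trans (add_le_add ?_ ?_))
  · have hw := profile_base_pos hp hb ξ
    have hp1 : 0 < p - 1 := by linarith
    have hbξ := mul_nonneg hb (sq_nonneg ξ)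
    have hu : |p - 1 - b * ξ ^ 2| ≤ p - 1 + b * ξ ^ 2 := abs_le.2 ⟨by linarith, by linarith⟩
    calc |-(2 * b * (p - 1 - b * ξ ^ 2)) / ((p - 1) * (p - 1 + b * ξ ^ 2) ^ 2)|
        = 2 * b * |p - 1 - b * ξ ^ 2| / ((p - 1) * (p - 1 + b * ξ ^ 2) ^ 2) := by
          rw [abs_div, abs_neg,
            abs_of_pos (by positivity : 0 < (p - 1) * (p - 1 + b * ξ ^ 2) ^ 2), abs_mul,
            abs_of_nonneg (by positivity : 0 ≤ 2 * b)]
      _ ≤ 2 * b * (p - 1 + b * ξ ^ 2) / ((p - 1) * (p - 1 + b * ξ ^ 2) ^ 2) := by gcongr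
      _ = 2 * b / ((p - 1) * (p - 1 + b * ξ ^ 2)) := by field_simp
      _ ≤ 2 * b / (p - 1) ^ 2 := by
          rw [sq (p - 1)]; gcongr; linarith
  · rw [abs_sq, ← sq_abs]
    exact pow_le_pow_left₀ (abs_nonneg _) (abs_profileDeriv_coeff_le hp hb ξ) 2

end Profile

namespace Params

variable (P : Params)

lemma one_lt_p : 1 < P.p := by linarith [P.hp]

lemma b_nonneg : 0 ≤ P.b := by
  have hp1 : 0 < P.p - 1 := by linarith [P.hp]
  have hI : 0 ≤ ∫ y : ℝ, |y| ^ P.q * Real.exp (-(y ^ 2) / 4) :=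
    integral_nonneg fun y => by positivity
  have : 0 ≤ P.p := by linarith [P.hp]
  have := P.hμ
  unfold b
  positivity

lemma a_nonneg : 0 ≤ P.a := by
  have hp1 : 0 < P.p - 1 := by linarith [P.hp]
  have := P.b_nonneg
  unfold a κ
  positivity

lemma one_le_two_mul_β : 1 ≤ 2 * P.β := by
  have hp1 : 0 < P.p - 1 := by linarith [P.hp]
  rw [β, mul_div_assoc', le_div_iff₀ (by positivity)]
  linarith

lemma one_le_β_mul_q : 1 ≤ P.β * P.q := by
  have hp1 : 0 < P.p - 1 := by linarith [P.hp]
  have hβq : P.β * P.q = P.p / (P.p - 1) := by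
    have : P.p + 1 ≠ 0 := by linarith [P.hp]
    rw [β, q]
    field_simp
  rw [hβq, le_div_iff₀ hp1]
  linarith

lemma φ_eq_profile {s : ℝ} (hs : 0 < s) (y : ℝ) :
    P.φ y s = profile P.p P.b (y / s ^ P.β) + P.a / s ^ (2 * P.β) := by
  rw [φ, profile, div_pow, ← Real.rpow_mul_natCast hs.le, mul_comm P.β, mul_div_assoc]
  norm_num

lemma hasDerivAt_φ_y {s : ℝ} (hs : 0 < s) (y : ℝ) :
    HasDerivAt (fun z => P.φ z s) (profileDeriv P.p P.b (y / s ^ P.β) / s ^ P.β) y := by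
  simp_rw [P.φ_eq_profile hs]
  exact (((hasDerivAt_profile P.one_lt_p P.b_nonneg _).comp y
    ((hasDerivAt_id y).div_const _)).add_const _).congr_deriv (by simp [div_eq_mul_inv])

lemma deriv_φ_y {s : ℝ} (hs : 0 < s) :
    deriv (fun z => P.φ z s) = fun y => profileDeriv P.p P.b (y / s ^ P.β) / s ^ P.β :=
  funext fun y => (P.hasDerivAt_φ_y hs y).deriv

lemma deriv_deriv_φ_y {s : ℝ} (hs : 0 < s) (y : ℝ) :
    deriv (deriv fun z => P.φ z s) y =
      profileDeriv2 P.p P.b (y / s ^ P.β) / s ^ (2 * P.β) := by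
  rw [P.deriv_φ_y hs]
  refine ((((hasDerivAt_profileDeriv P.one_lt_p P.b_nonneg _).comp y
    ((hasDerivAt_id y).div_const _)).div_const _).congr_deriv ?_).deriv
  rw [two_mul, Real.rpow_add hs]
  simp [div_eq_mul_inv, mul_assoc]

lemma hasDerivAt_φ_s {s : ℝ} (hs : 0 < s) (y : ℝ) :
    HasDerivAt (fun σ => P.φ y σ)
      (-(P.β / s) * (y / s ^ P.β * profileDeriv P.p P.b (y / s ^ P.β)) -
        2 * P.β / s * (P.a / s ^ (2 * P.β))) s := by
  have h := ((hasDerivAt_profile P.one_lt_p P.b_nonneg _).comp s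
    (hasDerivAt_div_rpow y P.β hs)).add (hasDerivAt_div_rpow P.a (2 * P.β) hs)
  refine (h.congr_of_eventuallyEq ?_).congr_deriv (by ring)
  filter_upwards [Ioi_mem_nhds hs] with σ hσ using P.φ_eq_profile hσ y

lemma exists_abs_deriv_φ_y_le :
    ∃ C, 0 ≤ C ∧ ∀ s, 0 < s → ∀ y, |deriv (fun z => P.φ z s) y| ≤ C / s ^ P.β := by
  refine ⟨(1 + P.b / (P.p - 1)) / (P.p - 1) * P.κ,
    (abs_nonneg _).trans (abs_profileDeriv_le P.one_lt_p P.b_nonneg 0), fun s hs y => ?_⟩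
  rw [(P.hasDerivAt_φ_y hs y).deriv, abs_div, abs_of_pos (Real.rpow_pos_of_pos hs _)]
  gcongr
  exact abs_profileDeriv_le P.one_lt_p P.b_nonneg _

lemma exists_abs_deriv_deriv_φ_y_le :
    ∃ C, 0 ≤ C ∧ ∀ s, 0 < s → ∀ y,
      |deriv (deriv fun z => P.φ z s) y| ≤ C / s ^ (2 * P.β) := by
  refine ⟨(2 * P.b / (P.p - 1) ^ 2 + ((1 + P.b / (P.p - 1)) / (P.p - 1)) ^ 2) * P.κ,
    (abs_nonneg _).trans (abs_profileDeriv2_le P.one_lt_p P.b_nonneg 0), fun s hs y => ?_⟩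
  rw [P.deriv_deriv_φ_y hs y, abs_div, abs_of_pos (Real.rpow_pos_of_pos hs _)]
  gcongr
  exact abs_profileDeriv2_le P.one_lt_p P.b_nonneg _

lemma exists_abs_deriv_φ_s_le :
    ∃ C, 0 ≤ C ∧ ∀ s, 1 ≤ s → ∀ y, |deriv (fun σ => P.φ y σ) s| ≤ C / s := by
  have hβ : 0 ≤ P.β := by linarith [P.one_le_two_mul_β]
  have ha := P.a_nonneg
  have hX := (abs_nonneg _).trans (abs_mul_profileDeriv_le P.one_lt_p P.b_nonneg 0)
  refine ⟨P.β * (2 / (P.p - 1) * P.κ + 2 * P.a), by positivity, fun s hs y => ?_⟩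
  have hs0 : 0 < s := by linarith
  have ht : P.a / s ^ (2 * P.β) ≤ P.a := div_le_self ha (Real.one_le_rpow hs (by linarith))
  have ht0 : 0 ≤ P.a / s ^ (2 * P.β) := by positivity
  rw [(P.hasDerivAt_φ_s hs0 y).deriv]
  calc _ ≤ P.β / s * |y / s ^ P.β * profileDeriv P.p P.b (y / s ^ P.β)| +
        2 * P.β / s * (P.a / s ^ (2 * P.β)) := by
        refine (abs_sub _ _).trans_eq ?_
        rw [abs_mul, abs_neg, abs_of_nonneg (by positivity : 0 ≤ P.β / s),
          abs_mul (2 * P.β / s), abs_of_nonneg (by positivity : 0 ≤ 2 * P.β / s),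
          abs_of_nonneg ht0]
    _ ≤ P.β / s * (2 / (P.p - 1) * P.κ) + 2 * P.β / s * P.a := by
        gcongr
        exact abs_mul_profileDeriv_le P.one_lt_p P.b_nonneg _
    _ = P.β * (2 / (P.p - 1) * P.κ + 2 * P.a) / s := by ring

/-- The terms of order one in `R`, `-(y/2) ∂_yφ - φ/(p-1) + φ^p`, cancel by `profile_ode` up to
`φ^p - Φ^p - (a/s^{2β})/(p-1)`. -/
lemma Rterm_eq {s : ℝ} (hs : 0 < s) (y : ℝ) :
    P.Rterm y s = deriv (deriv fun z => P.φ z s) y +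
      (P.φ y s ^ P.p - profile P.p P.b (y / s ^ P.β) ^ P.p) -
      P.a / s ^ (2 * P.β) / (P.p - 1) - deriv (fun σ => P.φ y σ) s +
      P.μ * |deriv (fun z => P.φ z s) y| ^ P.q := by
  rw [Rterm, (P.hasDerivAt_φ_y hs y).deriv, P.φ_eq_profile hs y]
  linear_combination profile_ode P.one_lt_p P.b_nonneg (y / s ^ P.β)

lemma abs_φ_rpow_sub_profile_rpow_le {s : ℝ} (hs : 1 ≤ s) (y : ℝ) :
    |P.φ y s ^ P.p - profile P.p P.b (y / s ^ P.β) ^ P.p| ≤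
      P.p * (P.κ + P.a) ^ (P.p - 1) * P.a / s := by
  have hs0 : 0 < s := by linarith
  have ha := P.a_nonneg
  have hΦ := profile_pos P.one_lt_p P.b_nonneg (y / s ^ P.β)
  have ht : 0 ≤ P.a / s ^ (2 * P.β) := by positivity
  have hφ : P.φ y s ≤ P.κ + P.a := by
    rw [P.φ_eq_profile hs0]
    exact add_le_add (profile_le P.one_lt_p P.b_nonneg _)
      (div_le_self ha (Real.one_le_rpow hs (by linarith [P.one_le_two_mul_β])))
  rw [P.φ_eq_profile hs0] at hφ ⊢
  have hφ0 := add_pos_of_pos_of_nonneg hΦ ht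
  rw [abs_of_nonneg (sub_nonneg.2 (Real.rpow_le_rpow hΦ.le (le_add_of_nonneg_right ht)
    (by linarith [P.hp])))]
  calc _ ≤ P.p * (profile P.p P.b (y / s ^ P.β) + P.a / s ^ (2 * P.β)) ^ (P.p - 1) *
        (P.a / s ^ (2 * P.β)) := by
        simpa using rpow_sub_rpow_le P.one_lt_p.le hΦ.le (le_add_of_nonneg_right ht)
    _ ≤ P.p * (P.κ + P.a) ^ (P.p - 1) * (P.a / s) :=
        mul_le_mul (mul_le_mul_of_nonneg_left (Real.rpow_le_rpow hφ0.le hφ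
            (by linarith [P.hp])) (by linarith [P.hp]))
          (div_rpow_le_div_self ha hs P.one_le_two_mul_β) ht
          (mul_nonneg (by linarith [P.hp]) (Real.rpow_nonneg (hφ0.le.trans hφ) _))
    _ = P.p * (P.κ + P.a) ^ (P.p - 1) * P.a / s := by ring

lemma exists_abs_Rterm_le :
    ∃ C, 0 ≤ C ∧ ∀ s, 1 ≤ s → ∀ y, |P.Rterm y s| ≤ C / s := by
  obtain ⟨C₁, hC₁, h₁⟩ := P.exists_abs_deriv_φ_y_le
  obtain ⟨C₂, hC₂, h₂⟩ := P.exists_abs_deriv_φ_s_le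
  obtain ⟨C₃, hC₃, h₃⟩ := P.exists_abs_deriv_deriv_φ_y_le
  have hp1 : 0 < P.p - 1 := by linarith [P.hp]
  have ha := P.a_nonneg
  have hμ := P.hμ
  have hκ : 0 ≤ P.κ := Real.rpow_nonneg hp1.le _
  have hp0 : 0 < P.p := by linarith
  have hq : 0 ≤ P.q := by unfold q; positivity
  have := div_nonneg ha hp1.le
  have := Real.rpow_nonneg (add_nonneg hκ ha) (P.p - 1)
  have := Real.rpow_nonneg hC₁ P.q
  refine ⟨C₃ + P.p * (P.κ + P.a) ^ (P.p - 1) * P.a + P.a / (P.p - 1) + C₂ +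
    P.μ * C₁ ^ P.q, by positivity, fun s hs y => ?_⟩
  have hs0 : 0 < s := by linarith
  have hT₁ := (h₃ s hs0 y).trans (div_rpow_le_div_self hC₃ hs P.one_le_two_mul_β)
  have hT₂ := P.abs_φ_rpow_sub_profile_rpow_le hs y
  have hT₃ : |P.a / s ^ (2 * P.β) / (P.p - 1)| ≤ P.a / (P.p - 1) / s := by
    rw [abs_of_nonneg (by positivity), div_right_comm]
    exact div_rpow_le_div_self (by positivity) hs P.one_le_two_mul_β
  have hT₄ := h₂ s hs y
  have hT₅ : |P.μ * |deriv (fun z => P.φ z s) y| ^ P.q| ≤ P.μ * C₁ ^ P.q / s := by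
    rw [abs_of_nonneg (by positivity), mul_div_assoc]
    gcongr
    calc _ ≤ (C₁ / s ^ P.β) ^ P.q := by gcongr; exact h₁ s hs0 y
      _ = C₁ ^ P.q / s ^ (P.β * P.q) := by
        rw [Real.div_rpow hC₁ (by positivity), Real.rpow_mul hs0.le]
      _ ≤ C₁ ^ P.q / s := div_rpow_le_div_self (by positivity) hs P.one_le_β_mul_q
  rw [P.Rterm_eq hs0 y, add_div, add_div, add_div, add_div]
  rw [abs_le] at hT₁ hT₂ hT₃ hT₄ hT₅ ⊢
  constructor <;> linarith

end Params

end NLHeat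

/-- bounds on the derivatives of the profile `φ` and on the rest term `R`. -/
theorem profile_and_rest_bounds (P : NLHeat.Params) :
    ∃ C : ℝ, 0 < C ∧ ∃ sstar : ℝ, 1 ≤ sstar ∧ ∀ s : ℝ, sstar ≤ s →
      (∀ y : ℝ, |deriv (fun z => P.φ z s) y| ≤ C / s ^ P.β) ∧
      (∀ y : ℝ, |deriv (fun σ => P.φ y σ) s| ≤ C / s) ∧
      (∀ y : ℝ, |deriv (deriv (fun z => P.φ z s)) y| ≤ C / s ^ (2 * P.β)) ∧
      (∀ y : ℝ, |P.Rterm y s| ≤ C / s) := by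
  obtain ⟨C₁, hC₁, h₁⟩ := P.exists_abs_deriv_φ_y_le
  obtain ⟨C₂, hC₂, h₂⟩ := P.exists_abs_deriv_φ_s_le
  obtain ⟨C₃, hC₃, h₃⟩ := P.exists_abs_deriv_deriv_φ_y_le
  obtain ⟨C₄, hC₄, h₄⟩ := P.exists_abs_Rterm_le
  refine ⟨C₁ + C₂ + C₃ + C₄ + 1, by positivity, 1, le_rfl, fun s hs => ?_⟩
  have hs0 : 0 < s := by linarith
  refine ⟨fun y => (h₁ s hs0 y).trans ?_, fun y => (h₂ s hs y).trans ?_,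
    fun y => (h₃ s hs0 y).trans ?_, fun y => (h₄ s hs y).trans ?_⟩ <;>
  exact div_le_div_of_nonneg_right (by linarith) (by positivity)
end
end
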